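/- arXiv:1207.0660 — 5 statements merged into one kernel-verified Lean document; each statement's English description precedes it below -/
import Mathlib

section
/- Let X be a compact subset of ℝ^m, F : X ⇉ X a correspondence, and for each α > 0 let G_α : X ⇉ X be an upper semicontinuous correspondence with closed graph. Suppose (i) G_α(x) ⊆ G_{α'}(x) whenever α < α' for every x ∈ X, and (ii) ⋂_{α>0} G_α(x) ⊆ F(x) for every x ∈ X. For δ ≥ 0 define F̂_δ(x) = { y ∈ X : ∃ (x*, y*) ∈ X × X with y* ∈ F(x*) and ‖(x*,y*) − (x,y)‖_∞ ≤ δ }. Then for every δ > 0 there exists α > 0 such that G_α(x) ⊆ F̂_δ(x) for all x ∈ X. -/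
/-- for usc correspondences G_α decreasing (as α ↓ 0) into F on a compact set X,
for every δ > 0 there is α > 0 with G_α(x) contained in the δ-graph-neighborhood of F. -/
theorem stmt_1 {m : ℕ} (X : Set (Fin m → ℝ)) (hX : IsCompact X)
    (F : (Fin m → ℝ) → Set (Fin m → ℝ))
    (G : ℝ → (Fin m → ℝ) → Set (Fin m → ℝ))
    (hGsub : ∀ α > (0:ℝ), ∀ x ∈ X, G α x ⊆ X)
    (hFsub : ∀ x ∈ X, F x ⊆ X)
    (hGclosed : ∀ α > (0:ℝ),
      IsClosed {p : (Fin m → ℝ) × (Fin m → ℝ) | p.1 ∈ X ∧ p.2 ∈ G α p.1})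
    (hmono : ∀ α α' : ℝ, 0 < α → α < α' → ∀ x ∈ X, G α x ⊆ G α' x)
    (hcap : ∀ x ∈ X, (⋂ α > (0:ℝ), G α x) ⊆ F x)
    (δ : ℝ) (hδ : 0 < δ) :
    ∃ α > (0:ℝ), ∀ x ∈ X, G α x ⊆
      {y | y ∈ X ∧ ∃ x' y', x' ∈ X ∧ y' ∈ X ∧ y' ∈ F x' ∧ ‖(x', y') - (x, y)‖ ≤ δ} := by
  by_contra h
  push_neg at h
  simp only [Set.not_subset] at h
  have hseq : ∀ n : ℕ, ∃ p : (Fin m → ℝ) × (Fin m → ℝ),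
      p.1 ∈ X ∧ p.2 ∈ G (1/(n+1)) p.1 ∧
      p.2 ∉ {y | y ∈ X ∧ ∃ x' y', x' ∈ X ∧ y' ∈ X ∧ y' ∈ F x' ∧
        ‖(x', y') - (p.1, y)‖ ≤ δ} := by
    intro n
    obtain ⟨x, hx, y, hy, hny⟩ := h (1/(n+1)) (by positivity)
    exact ⟨(x, y), hx, hy, hny⟩
  choose p hp1 hp2 hp3 using hseq
  have hpmem : ∀ n, p n ∈ X ×ˢ X := fun n =>
    ⟨hp1 n, hGsub _ (by positivity) _ (hp1 n) (hp2 n)⟩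
  obtain ⟨q, hq, φ, hφmono, hφtend⟩ := (hX.prod hX).tendsto_subseq hpmem
  have hGq : ∀ α > (0:ℝ), q.2 ∈ G α q.1 := by
    intro α hα
    obtain ⟨N, hN⟩ := exists_nat_one_div_lt hα
    have hev : ∀ᶠ n in Filter.atTop,
        p (φ n) ∈ {p : (Fin m → ℝ) × (Fin m → ℝ) | p.1 ∈ X ∧ p.2 ∈ G α p.1} := by
      filter_upwards [Filter.eventually_ge_atTop N] with n hn
      refine ⟨hp1 _, hmono (1/(φ n + 1)) α (by positivity) ?_ _ (hp1 _) (hp2 _)⟩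
      calc (1:ℝ)/(φ n + 1) ≤ 1/(N+1) := by
              apply one_div_le_one_div_of_le (by positivity)
              have : (N:ℝ) ≤ φ n := by exact_mod_cast hn.trans (hφmono.le_apply)
              linarith
        _ < α := hN
    exact ((hGclosed α hα).mem_of_tendsto hφtend hev).2
  have hFq : q.2 ∈ F q.1 := by
    apply hcap q.1 hq.1
    simp only [Set.mem_iInter]
    exact fun α hα => hGq α hα
  have hev : ∀ᶠ n in Filter.atTop, p (φ n) ∈ Metric.ball q δ :=
    hφtend (Metric.ball_mem_nhds q hδ)
  obtain ⟨n, hn⟩ := hev.exists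
  apply hp3 (φ n)
  refine ⟨hGsub _ (by positivity) _ (hp1 _) (hp2 _), q.1, q.2, hq.1, hq.2, hFq, ?_⟩
  have : ‖q - p (φ n)‖ ≤ δ := by
    rw [← dist_eq_norm]
    exact le_of_lt (by simpa [dist_comm] using hn)
  simpa using this
end

section
/- Let P : ℝ^d → ℝ be twice continuously differentiable with ‖y ⋅ ∇²P(z) y‖ ≤ c'' ‖y‖² for all z in a convex set containing x₀ and x. Suppose x − x₀ = (1/t)(r − x₀) for some vector r and t ≥ 1, P is convex with P(0) = 0. Then t·P(x) − (t−1)·P(x₀) ≤ ∇P(x₀) · r + (c''/(2t)) ‖r − x₀‖². -/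
/-!
Write `v = x - x₀ = (r - x₀) / t`. Second-order Taylor expansion of `P` along the segment from
`x₀` to `x`, with the Hessian bound controlling the remainder, gives
`P x ≤ P x₀ + ∇P(x₀)·v + c''‖v‖² / 2`. Multiplying by `t` turns the right-hand side into
`t P(x₀) + ∇P(x₀)·(r - x₀) + c''‖r - x₀‖² / (2t)`, and the supporting hyperplane of the convex
function `P` at `x₀`, evaluated at `0`, gives `P(x₀) ≤ ∇P(x₀)·x₀` since `P 0 = 0`.
-/

open Set AffineMap

theorem le_add_deriv_add_half_of_deriv2_le {g g' g'' : ℝ → ℝ} {K : ℝ}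
    (hg : ∀ s, HasDerivAt g (g' s) s) (hg' : ∀ s, HasDerivAt g' (g'' s) s)
    (hK : ∀ s ∈ Icc (0 : ℝ) 1, g'' s ≤ K) :
    g 1 ≤ g 0 + g' 0 + K / 2 := by
  have hI : (0 : ℝ) ∈ Icc (0 : ℝ) 1 := ⟨le_rfl, zero_le_one⟩
  have hg'_le : ∀ s ∈ Icc (0 : ℝ) 1, g' s - g' 0 ≤ K * s := fun s hs => by
    simpa using (convex_Icc (0 : ℝ) 1).image_sub_le_mul_sub_of_deriv_le
      (fun u _ => (hg' u).continuousAt.continuousWithinAt)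
      (fun u _ => (hg' u).differentiableAt.differentiableWithinAt)
      (fun u hu => (hg' u).deriv ▸ hK u (interior_subset hu)) 0 hI s hs hs.1
  let φ : ℝ → ℝ := fun s => g s - g' 0 * s - K * s ^ 2 / 2
  have hφ : ∀ s, HasDerivAt φ (g' s - g' 0 - K * s) s := fun s => by
    refine (((hg s).sub ((hasDerivAt_id s).const_mul (g' 0))).sub
      (((hasDerivAt_pow 2 s).const_mul K).div_const 2)).congr_deriv ?_
    norm_num
    ring
  have hφ_le := (convex_Icc (0 : ℝ) 1).image_sub_le_mul_sub_of_deriv_le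
    (fun u _ => (hφ u).continuousAt.continuousWithinAt)
    (fun u _ => (hφ u).differentiableAt.differentiableWithinAt)
    (fun u hu => (hφ u).deriv ▸ sub_nonpos.mpr (hg'_le u (interior_subset hu)))
    0 hI 1 ⟨zero_le_one, le_rfl⟩ zero_le_one
  simp only [φ] at hφ_le
  linarith

theorem le_add_fderiv_add_half_of_fderiv_fderiv_le {E : Type*} [NormedAddCommGroup E]
    [NormedSpace ℝ E] {f : E → ℝ} (hf : Differentiable ℝ f)
    (hf' : Differentiable ℝ (fderiv ℝ f)) {a b : E} {K : ℝ}
    (hK : ∀ z ∈ segment ℝ a b, fderiv ℝ (fderiv ℝ f) z (b - a) (b - a) ≤ K) :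
    f b ≤ f a + fderiv ℝ f a (b - a) + K / 2 := by
  have hγ : ∀ s : ℝ, HasDerivAt (lineMap a b) (b - a) s := fun _ => hasDerivAt_lineMap
  have key := le_add_deriv_add_half_of_deriv2_le (g := fun s => f (lineMap a b s))
    (fun s => (hf _).hasFDerivAt.comp_hasDerivAt s (hγ s))
    (fun s => by
      simpa using ((hf' _).hasFDerivAt.comp_hasDerivAt s (hγ s)).clm_apply
        (hasDerivAt_const s (b - a)))
    (fun s hs => hK _ (lineMap_mem_segment ℝ a b hs))
  simpa using key

theorem ConvexOn.add_fderiv_sub_le {E : Type*} [NormedAddCommGroup E] [NormedSpace ℝ E]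
    {s : Set E} {f : E → ℝ} {f' : E →L[ℝ] ℝ} {x y : E} (hf : ConvexOn ℝ s f)
    (hx : x ∈ s) (hy : y ∈ s) (hf' : HasFDerivAt f f' x) :
    f x + f' (y - x) ≤ f y := by
  let γ : ℝ →ᵃ[ℝ] E := lineMap x y
  have hline : ConvexOn ℝ (Icc 0 1) (f ∘ γ) :=
    (hf.comp_affineMap γ).subset
      (fun θ hθ => hf.1.segment_subset hx hy (lineMap_mem_segment ℝ x y hθ)) (convex_Icc 0 1)
  have hderiv : HasDerivAt (f ∘ γ) (f' (y - x)) 0 :=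
    hf'.comp_hasDerivAt_of_eq 0 hasDerivAt_lineMap (lineMap_apply_zero x y).symm
  have hslope := hline.le_slope_of_hasDerivAt ⟨le_rfl, zero_le_one⟩ ⟨zero_le_one, le_rfl⟩
    zero_lt_one hderiv
  simp only [slope_def_field, Function.comp_apply, γ, lineMap_apply_zero, lineMap_apply_one,
    sub_zero, div_one] at hslope
  linarith

/-- key potential inequality along a regret update x = ((t−1)/t)x₀ + (1/t)r. -/
theorem stmt_4 {d : ℕ} (P : (Fin d → ℝ) → ℝ)
    (hP : ContDiff ℝ 2 P) (hconv : ConvexOn ℝ Set.univ P) (h0 : P 0 = 0)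
    (c'' : ℝ) (x₀ x r : Fin d → ℝ) (t : ℝ) (ht : 1 ≤ t)
    (hhess : ∀ z ∈ segment ℝ x₀ x, ∀ y : Fin d → ℝ,
      |fderiv ℝ (fderiv ℝ P) z y y| ≤ c'' * ‖y‖ ^ 2)
    (hupd : x - x₀ = (1 / t) • (r - x₀)) :
    t * P x - (t - 1) * P x₀ ≤ fderiv ℝ P x₀ r + c'' / (2 * t) * ‖r - x₀‖ ^ 2 := by
  have ht0 : 0 < t := zero_lt_one.trans_le ht
  have hdiff : Differentiable ℝ P := hP.differentiable (by norm_num)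
  have htaylor := le_add_fderiv_add_half_of_fderiv_fderiv_le hdiff
    ((hP.fderiv_right (m := 1) (by norm_num)).differentiable (by norm_num))
    (fun z hz => (le_abs_self _).trans (hhess z hz (x - x₀)))
  have hsupport : P x₀ ≤ fderiv ℝ P x₀ x₀ := by
    simpa [h0] using hconv.add_fderiv_sub_le (mem_univ x₀) (mem_univ 0) (hdiff x₀).hasFDerivAt
  rw [hupd, map_smul, smul_eq_mul, norm_smul, Real.norm_of_nonneg (by positivity),
    map_sub] at htaylor
  have hscaled := mul_le_mul_of_nonneg_left htaylor ht0.le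
  have hexpand : t * (P x₀ + 1 / t * (fderiv ℝ P x₀ r - fderiv ℝ P x₀ x₀)
      + c'' * (1 / t * ‖r - x₀‖) ^ 2 / 2) = t * P x₀ + (fderiv ℝ P x₀ r - fderiv ℝ P x₀ x₀)
      + c'' / (2 * t) * ‖r - x₀‖ ^ 2 := by
    field_simp
  linarith
end

section
/- In a finite two-player zero-sum game, if a correlated action z ∈ Δ(A) lies in the Hannan set (i.e., max_{k ∈ A_i} u_i(k, z_{-i}) ≤ u_i(z) for i = 1, 2), then the pair of marginals (z_1, z_2) is a Nash equilibrium of the game. -/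
open Finset

/-- in a finite two-player zero-sum game (player 2's payoff is −u), if z is in the
Hannan set then the pair of marginals is a Nash equilibrium. -/
theorem stmt_5 {A1 A2 : Type*} [Fintype A1] [Fintype A2] [Nonempty A1] [Nonempty A2]
    (u : A1 → A2 → ℝ) (z : A1 → A2 → ℝ)
    (hz0 : ∀ a b, 0 ≤ z a b) (hz1 : ∑ a, ∑ b, z a b = 1)
    (hH1 : ∀ k, ∑ b, (∑ a, z a b) * u k b ≤ ∑ a, ∑ b, z a b * u a b)
    (hH2 : ∀ s, ∑ a, (∑ b, z a b) * (-(u a s)) ≤ ∑ a, ∑ b, z a b * (-(u a b))) :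
    (∀ k, ∑ b, (∑ a, z a b) * u k b
        ≤ ∑ a, ∑ b, (∑ b', z a b') * ((∑ a', z a' b) * u a b))
    ∧ (∀ s, ∑ a, (∑ b, z a b) * (-(u a s))
        ≤ ∑ a, ∑ b, (∑ b', z a b') * ((∑ a', z a' b) * (-(u a b)))) := by
  set p : A1 → ℝ := fun a => ∑ b, z a b with hp
  set q : A2 → ℝ := fun b => ∑ a, z a b with hq
  set v : ℝ := ∑ a, ∑ b, z a b * u a b with hv
  have hp0 : ∀ a, 0 ≤ p a := fun a => Finset.sum_nonneg fun b _ => hz0 a b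
  have hq0 : ∀ b, 0 ≤ q b := fun b => Finset.sum_nonneg fun a _ => hz0 a b
  have hps : ∑ a, p a = 1 := hz1
  have hqs : ∑ b, q b = 1 := by
    rw [← hz1, Finset.sum_comm]
  set U : ℝ := ∑ a, ∑ b, p a * (q b * u a b) with hU
  -- hH2 rewritten: v ≤ ∑ a, p a * u a s
  have hH2' : ∀ s, v ≤ ∑ a, p a * u a s := by
    intro s
    have := hH2 s
    simp only [mul_neg, Finset.sum_neg_distrib, neg_le_neg_iff] at this
    linarith [this]
  have hUv : U ≤ v := by
    calc U = ∑ a, p a * (∑ b, q b * u a b) := by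
            simp [hU, Finset.mul_sum]
      _ ≤ ∑ a, p a * v := by
            apply Finset.sum_le_sum
            intro a _
            exact mul_le_mul_of_nonneg_left (hH1 a) (hp0 a)
      _ = v := by rw [← Finset.sum_mul, hps, one_mul]
  have hvU : v ≤ U := by
    calc v = ∑ b, q b * v := by rw [← Finset.sum_mul, hqs, one_mul]
      _ ≤ ∑ b, q b * (∑ a, p a * u a b) := by
            apply Finset.sum_le_sum
            intro b _
            exact mul_le_mul_of_nonneg_left (hH2' b) (hq0 b)
      _ = U := by
            rw [hU, Finset.sum_comm]
            congr 1
            ext b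
            rw [Finset.mul_sum]
            congr 1
            ext a
            ring
  have hUveq : U = v := le_antisymm hUv hvU
  constructor
  · intro k
    calc ∑ b, (∑ a, z a b) * u k b ≤ v := hH1 k
      _ = U := hUveq.symm
      _ = _ := rfl
  · intro s
    have h1 : ∑ a, ∑ b, p a * (q b * (-(u a b))) = -U := by
      rw [hU, ← Finset.sum_neg_distrib]
      congr 1; ext a
      rw [← Finset.sum_neg_distrib]
      congr 1; ext b
      ring
    have h2 : ∑ a, (∑ b, z a b) * (-(u a s)) = -(∑ a, p a * u a s) := by
      rw [← Finset.sum_neg_distrib]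
      congr 1; ext a
      ring
    rw [h1, h2] at *
    have := hH2' s
    linarith [hUveq]
end

section
/- Let z : [1, ∞) → Δ(A) be an absolutely continuous solution of continuous fictitious play in a finite two-player game, i.e., ż(t) = (1/t)(q̄(t) − z(t)) for a.e. t, where q̄(t) = q_1(t) ⊗ q_2(t) and q_i(t) is a mixed best reply of player i to z_{-i}(t). Then for each player i, the maximal regret v_i(t) := max_{k ∈ A_i} u_i(k, z_{-i}(t)) − u_i(z(t)) satisfies v̇_i(t) = −(1/t) v_i(t) for a.e. t where v_i(t) > 0; consequently [v_i(t)]_+ ≤ (1/t)[v_i(1)]_+ → 0, and z(t) converges to the reduced Hannan set. -/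
open Finset MeasureTheory Filter

/-!
Along the flow `t • v_i(t)` is constant. Indeed `t • z(t)` has derivative `q̄(t)`, so each
`G_k(t) = t (u_i(k, z_{-i}(t)) - u_i(z(t)))` is absolutely continuous with derivative
`u_i(k, q_{-i}(t)) - u_i(q̄(t))`. Now `t v_i(t) = max_k G_k(t)`, and wherever this upper envelope is
differentiable its derivative equals that of every active `G_k`; since the best reply `q_i(t)` is
supported on active strategies, it equals the `q_i(t)`-average of these derivatives, which is `0`.
Hence `v_i(t) = v_i(1) / t`.
-/

namespace AbsolutelyContinuousOnInterval

variable {X Y F : Type*} [PseudoMetricSpace X] [PseudoMetricSpace Y] [SeminormedAddCommGroup F]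
  {a b : ℝ}

theorem congr {f g : ℝ → X} (hf : AbsolutelyContinuousOnInterval f a b)
    (hfg : Set.EqOn f g (Set.uIcc a b)) : AbsolutelyContinuousOnInterval g a b := by
  refine Tendsto.congr' ?_ hf
  filter_upwards [mem_inf_of_right (mem_principal_self _)] with E hE
  exact sum_congr rfl fun i hi => by rw [hfg (hE.1 i hi).1, hfg (hE.1 i hi).2]

theorem of_dist_le_sum {ι : Type*} (s : Finset ι) {f : ι → ℝ → X} {g : ℝ → Y}
    (hf : ∀ i ∈ s, AbsolutelyContinuousOnInterval (f i) a b)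
    (hg : ∀ x y, dist (g x) (g y) ≤ ∑ i ∈ s, dist (f i x) (f i y)) :
    AbsolutelyContinuousOnInterval g a b := by
  refine squeeze_zero (fun E => sum_nonneg fun _ _ => dist_nonneg) (fun E => ?_)
    (by simpa using tendsto_finsetSum s hf)
  rw [Finset.sum_comm]
  exact sum_le_sum fun j _ => hg _ _

theorem finset_sum {ι : Type*} (s : Finset ι) {f : ι → ℝ → F}
    (hf : ∀ i ∈ s, AbsolutelyContinuousOnInterval (f i) a b) :
    AbsolutelyContinuousOnInterval (fun x => ∑ i ∈ s, f i x) a b :=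
  of_dist_le_sum s hf fun _ _ => dist_sum_sum_le _ _ _

end AbsolutelyContinuousOnInterval

theorem Finset.dist_sup'_sup'_le_sum {ι : Type*} (s : Finset ι) (hs : s.Nonempty) (f g : ι → ℝ) :
    dist (s.sup' hs f) (s.sup' hs g) ≤ ∑ i ∈ s, dist (f i) (g i) := by
  have key : ∀ f g : ι → ℝ, s.sup' hs f ≤ s.sup' hs g + ∑ i ∈ s, dist (f i) (g i) := by
    intro f g
    refine sup'_le _ _ fun i hi => ?_
    have h1 : f i ≤ g i + dist (f i) (g i) := by
      rw [Real.dist_eq]; linarith [le_abs_self (f i - g i)]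
    have h2 : dist (f i) (g i) ≤ ∑ j ∈ s, dist (f j) (g j) :=
      single_le_sum (fun j _ => dist_nonneg) hi
    linarith [le_sup' g hi]
  have h1 := key f g
  have h2 := key g f
  simp only [dist_comm (g _)] at h2
  rw [Real.dist_eq, abs_sub_le_iff]
  constructor <;> linarith

theorem AbsolutelyContinuousOnInterval.finset_sup' {ι : Type*} (s : Finset ι) (hs : s.Nonempty)
    {f : ι → ℝ → ℝ} {a b : ℝ} (hf : ∀ i ∈ s, AbsolutelyContinuousOnInterval (f i) a b) :
    AbsolutelyContinuousOnInterval (fun x => s.sup' hs (f · x)) a b :=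
  of_dist_le_sum s hf fun _ _ => s.dist_sup'_sup'_le_sum hs _ _

section IntegralEquation

variable {F f : ℝ → ℝ} {a b : ℝ}

theorem AbsolutelyContinuousOnInterval.of_eq_add_integral (hf : IntervalIntegrable f volume a b)
    (hF : ∀ t ∈ Set.uIcc a b, F t = F a + ∫ s in a..t, f s) :
    AbsolutelyContinuousOnInterval F a b :=
  (((LipschitzWith.const (F a)).lipschitzOnWith.absolutelyContinuousOnInterval).add
    (hf.absolutelyContinuousOnInterval_intervalIntegral Set.left_mem_uIcc)).congr
    fun t ht => (hF t ht).symm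

theorem IntervalIntegrable.ae_hasDerivAt_of_eq_add_integral (hf : IntervalIntegrable f volume a b)
    (hF : ∀ t ∈ Set.uIcc a b, F t = F a + ∫ s in a..t, f s) :
    ∀ᵐ x, x ∈ Set.uIcc a b → HasDerivAt F (f x) x := by
  filter_upwards [hf.ae_hasDerivAt_integral, volume.ae_ne a, volume.ae_ne b]
    with x hx hxa hxb hmem
  have hxI : x ∈ Set.Ioo (min a b) (max a b) :=
    ⟨lt_of_le_of_ne hmem.1 (by rcases min_choice a b with h | h <;> rw [h] <;> grind),
     lt_of_le_of_ne hmem.2 (by rcases max_choice a b with h | h <;> rw [h] <;> grind)⟩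
  have hev : F =ᶠ[nhds x] fun t => F a + ∫ s in a..t, f s := by
    filter_upwards [isOpen_Ioo.mem_nhds hxI] with t ht
    exact hF t (Set.Ioo_subset_Icc_self ht)
  exact ((hx hmem a Set.left_mem_uIcc).const_add (F a)).congr_of_eventuallyEq hev

end IntegralEquation

theorem HasDerivAt.eq_of_le_of_eq {f g : ℝ → ℝ} {f' g' x : ℝ} (hf : HasDerivAt f f' x)
    (hg : HasDerivAt g g' x) (hle : ∀ y, f y ≤ g y) (heq : f x = g x) : f' = g' := by
  have hmin : IsLocalMin (fun y => g y - f y) x :=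
    Eventually.of_forall fun y => by linarith [hle y]
  linarith [hmin.hasDerivAt_eq_zero (hg.sub hf)]

theorem AbsolutelyContinuousOnInterval.sup'_eq_of_active_weights {ι : Type*} [Fintype ι]
    [Nonempty ι] {G g : ι → ℝ → ℝ} {q : ℝ → ι → ℝ} {a b : ℝ}
    (hG : ∀ k, AbsolutelyContinuousOnInterval (G k) a b)
    (hderiv : ∀ᵐ x, x ∈ Set.uIcc a b → ∀ k, HasDerivAt (G k) (g k x) x)
    (hactive : ∀ x ∈ Set.uIcc a b, ∀ k, q x k ≠ 0 → G k x = univ.sup' univ_nonempty (G · x))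
    (hq : ∀ x ∈ Set.uIcc a b, ∑ k, q x k ≠ 0)
    (hbal : ∀ x ∈ Set.uIcc a b, ∑ k, q x k * g k x = 0) :
    univ.sup' univ_nonempty (G · b) = univ.sup' univ_nonempty (G · a) := by
  set h : ℝ → ℝ := fun x => univ.sup' univ_nonempty (G · x)
  have hh : AbsolutelyContinuousOnInterval h a b := finset_sup' univ _ fun k _ => hG k
  have hzero : ∀ᵐ x, x ∈ Set.uIcc a b → HasDerivAt h 0 x := by
    filter_upwards [hh.ae_differentiableAt, hderiv] with x hdiff hGx hx
    have hhx := (hdiff hx).hasDerivAt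
    have hslope : ∀ k, q x k * deriv h x = q x k * g k x := fun k => by
      by_cases hk : q x k = 0
      · simp [hk]
      · rw [(hGx hx k).eq_of_le_of_eq hhx (fun y => le_sup' (G · y) (mem_univ k))
          (hactive x hx k hk)]
    have : (∑ k, q x k) * deriv h x = 0 := by
      rw [sum_mul, ← hbal x hx]
      exact sum_congr rfl fun k _ => hslope k
    rwa [(mul_eq_zero.1 this).resolve_left (hq x hx)] at hhx
  obtain ⟨C, hC⟩ := hh.const_of_ae_hasDerivAt_zero hzero
  exact (hC b Set.right_mem_uIcc).trans (hC a Set.left_mem_uIcc).symm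

theorem Finset.eq_sup'_of_sum_mul_eq_sup' {ι : Type*} [Fintype ι] [Nonempty ι] {q c : ι → ℝ}
    (hq0 : ∀ k, 0 ≤ q k) (hq1 : ∑ k, q k = 1)
    (h : ∑ k, q k * c k = univ.sup' univ_nonempty c) {k : ι} (hk : q k ≠ 0) :
    c k = univ.sup' univ_nonempty c := by
  set S := univ.sup' univ_nonempty c
  have hle : ∀ j, c j ≤ S := fun j => le_sup' c (mem_univ j)
  have hgap : ∑ j, q j * (S - c j) = 0 := by
    simp only [mul_sub, sum_sub_distrib, ← sum_mul, hq1, h, one_mul, sub_self]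
  have := (sum_eq_zero_iff_of_nonneg fun j _ => mul_nonneg (hq0 j) (sub_nonneg.2 (hle j))).1
    hgap k (mem_univ k)
  linarith [(mul_eq_zero.1 this).resolve_left hk]

theorem Finset.sum_mul_sum_mul_sub_eq_zero {ι : Type*} (s : Finset ι) (q c : ι → ℝ) :
    ∑ k ∈ s, q k * ∑ a ∈ s, q a * (c k - c a) = 0 := by
  simp only [mul_sum, mul_sub, sum_sub_distrib, sub_eq_zero]
  rw [sum_comm]
  exact sum_congr rfl fun _ _ => sum_congr rfl fun _ _ => by ring

theorem hasDerivAt_mul_self_of_hasDerivAt_inv_mul_sub {y : ℝ → ℝ} {p x : ℝ} (hx : x ≠ 0)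
    (hy : HasDerivAt y (1 / x * (p - y x)) x) : HasDerivAt (fun t => t * y t) p x :=
  ((hasDerivAt_id' x).fun_mul hy).congr_deriv (by field_simp; ring)

section InverseDecay

variable {V : ℝ → ℝ}

theorem eq_div_of_forall_mul_eq (hV : ∀ t ≥ (1:ℝ), t * V t = V 1) {t : ℝ} (ht : 1 ≤ t) :
    V t = V 1 / t := by
  rw [← hV t ht, mul_div_cancel_left₀ _ (by positivity)]

theorem hasDerivAt_of_forall_mul_eq (hV : ∀ t ≥ (1:ℝ), t * V t = V 1) {t : ℝ} (ht : 1 < t) :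
    HasDerivAt V (-(1 / t) * V t) t := by
  have hev : (fun s => V 1 / s) =ᶠ[nhds t] V := by
    filter_upwards [Ioi_mem_nhds ht] with s hs
    exact (eq_div_of_forall_mul_eq hV (le_of_lt hs)).symm
  refine ((hasDerivAt_inv (by positivity)).const_mul (V 1)).congr_of_eventuallyEq hev.symm
    |>.congr_deriv ?_
  rw [eq_div_of_forall_mul_eq hV ht.le]
  ring

theorem max_le_of_forall_mul_eq (hV : ∀ t ≥ (1:ℝ), t * V t = V 1) {t : ℝ} (ht : 1 ≤ t) :
    max (V t) 0 ≤ (1 / t) * max (V 1) 0 := by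
  rw [eq_div_of_forall_mul_eq hV ht, mul_max_of_nonneg _ _ (by positivity)]
  simp [div_eq_inv_mul]

theorem tendsto_zero_of_forall_mul_eq (hV : ∀ t ≥ (1:ℝ), t * V t = V 1) :
    Tendsto V atTop (nhds 0) := by
  refine Tendsto.congr' ?_ (by simpa using tendsto_inv_atTop_zero.const_mul (V 1))
  filter_upwards [eventually_ge_atTop 1] with t ht
  rw [eq_div_of_forall_mul_eq hV ht, div_eq_mul_inv]

end InverseDecay

section FictitiousPlay

variable {A1 A2 : Type*} [Fintype A1] [Fintype A2]

-- `max_k u(k, z₂) - u(z)` for player 1 with payoff `u` at the mixed profile `z`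
def maxRegret [Nonempty A1] (u z : A1 → A2 → ℝ) : ℝ :=
  univ.sup' univ_nonempty (fun k => ∑ b, (∑ a', z a' b) * u k b) - ∑ a, ∑ b, z a b * u a b

theorem sum_sum_sub_mul_mul_eq (u z : A1 → A2 → ℝ) (t : ℝ) (k : A1) :
    ∑ a, ∑ b, (u k b - u a b) * (t * z a b)
      = t * (∑ b, (∑ a', z a' b) * u k b - ∑ a, ∑ b, z a b * u a b) := by
  simp only [sub_mul, sum_sub_distrib, mul_sub, Finset.mul_sum, Finset.sum_mul]
  rw [Finset.sum_comm (s := univ) (t := univ)]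
  congr 1 <;> exact sum_congr rfl fun _ _ => sum_congr rfl fun _ _ => by ring

theorem mul_maxRegret [Nonempty A1] (u z : A1 → A2 → ℝ) {t : ℝ} (ht : 0 ≤ t) :
    t * maxRegret u z
      = univ.sup' univ_nonempty fun k => ∑ a, ∑ b, (u k b - u a b) * (t * z a b) := by
  rw [maxRegret, mul_sub, mul₀_sup' ht, sub_eq_add_neg, sup'_add]
  congr 1
  funext k
  rw [sum_sum_sub_mul_mul_eq, mul_sub, sub_eq_add_neg]

theorem mul_maxRegret_eq_of_fictitiousPlay [Nonempty A1] (u : A1 → A2 → ℝ) (z : ℝ → A1 → A2 → ℝ)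
    (q1 : ℝ → A1 → ℝ) (q2 : ℝ → A2 → ℝ)
    (hq1 : ∀ t ≥ (1:ℝ), (∀ a, 0 ≤ q1 t a) ∧ ∑ a, q1 t a = 1)
    (hbr : ∀ t ≥ (1:ℝ), ∑ a, q1 t a * (∑ b, (∑ a', z t a' b) * u a b)
        = univ.sup' univ_nonempty (fun k => ∑ b, (∑ a', z t a' b) * u k b))
    (hint : ∀ a b, ∀ t ≥ (1:ℝ), IntervalIntegrable
      (fun s => (1 / s) * (q1 s a * q2 s b - z s a b)) volume 1 t)
    (hsol : ∀ t ≥ (1:ℝ), ∀ a b,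
      z t a b = z 1 a b + ∫ s in (1:ℝ)..t, (1 / s) * (q1 s a * q2 s b - z s a b))
    (T : ℝ) (hT : 1 ≤ T) : T * maxRegret u (z T) = maxRegret u (z 1) := by
  have hge : ∀ x ∈ Set.uIcc 1 T, 1 ≤ x := fun x hx => by
    rw [Set.uIcc_of_le hT] at hx; exact hx.1
  have hsolT : ∀ a b, ∀ t ∈ Set.uIcc 1 T,
      z t a b = z 1 a b + ∫ s in (1:ℝ)..t, (1 / s) * (q1 s a * q2 s b - z s a b) :=
    fun a b t ht => hsol t (hge t ht) a b
  have hderiv : ∀ᵐ x, x ∈ Set.uIcc 1 T → ∀ a b,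
      HasDerivAt (z · a b) ((1 / x) * (q1 x a * q2 x b - z x a b)) x := by
    have h := fun a b => (hint a b T hT).ae_hasDerivAt_of_eq_add_integral (hsolT a b)
    filter_upwards [ae_all_iff.2 fun a => ae_all_iff.2 (h a)] with x hx hmem a b
    exact hx a b hmem
  set G : A1 → ℝ → ℝ := fun k t => ∑ a, ∑ b, (u k b - u a b) * (t * z t a b)
  set d : ℝ → A1 → ℝ := fun x k => ∑ b, q2 x b * u k b
  have hGac : ∀ k, AbsolutelyContinuousOnInterval (G k) 1 T := fun k =>
    .finset_sum _ fun a _ => .finset_sum _ fun b _ =>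
      ((LipschitzWith.id.lipschitzOnWith.absolutelyContinuousOnInterval.fun_mul
        (.of_eq_add_integral (hint a b T hT) (hsolT a b))).const_mul _)
  have hGderiv : ∀ᵐ x, x ∈ Set.uIcc 1 T → ∀ k,
      HasDerivAt (G k) (∑ a, q1 x a * (d x k - d x a)) x := by
    filter_upwards [hderiv] with x hx hmem k
    have hx0 : x ≠ 0 := (zero_lt_one.trans_le (hge x hmem)).ne'
    refine (HasDerivAt.fun_sum fun a _ => HasDerivAt.fun_sum fun b _ =>
      (hasDerivAt_mul_self_of_hasDerivAt_inv_mul_sub hx0 (hx hmem a b)).const_mul _).congr_deriv ?_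
    simp only [d, mul_sub, Finset.mul_sum, sub_mul, sum_sub_distrib]
    congr 1 <;> exact sum_congr rfl fun _ _ => sum_congr rfl fun _ _ => by ring
  have hactive : ∀ x ∈ Set.uIcc 1 T, ∀ k, q1 x k ≠ 0 →
      G k x = univ.sup' univ_nonempty (G · x) := by
    intro x hx k hk
    obtain ⟨hq0, hq1⟩ := hq1 x (hge x hx)
    simp only [G]
    rw [← mul_maxRegret _ _ (zero_le_one.trans (hge x hx)), sum_sum_sub_mul_mul_eq,
      eq_sup'_of_sum_mul_eq_sup' hq0 hq1 (hbr x (hge x hx)) hk, maxRegret]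
  calc T * maxRegret u (z T) = univ.sup' univ_nonempty (G · T) := mul_maxRegret _ _ (by positivity)
    _ = univ.sup' univ_nonempty (G · 1) :=
      AbsolutelyContinuousOnInterval.sup'_eq_of_active_weights hGac hGderiv hactive
        (fun x hx => by simp [(hq1 x (hge x hx)).2]) (fun x _ => sum_mul_sum_mul_sub_eq_zero _ _ _)
    _ = maxRegret u (z 1) := by rw [← mul_maxRegret _ _ zero_le_one, one_mul]

end FictitiousPlay

theorem stmt_9_general {A1 A2 : Type*} [Fintype A1] [Fintype A2] [Nonempty A1] [Nonempty A2]
    (u1 u2 : A1 → A2 → ℝ)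
    (z : ℝ → A1 → A2 → ℝ) (q1 : ℝ → A1 → ℝ) (q2 : ℝ → A2 → ℝ)
    (hq1prob : ∀ t ≥ (1:ℝ), (∀ a, 0 ≤ q1 t a) ∧ ∑ a, q1 t a = 1)
    (hq2prob : ∀ t ≥ (1:ℝ), (∀ b, 0 ≤ q2 t b) ∧ ∑ b, q2 t b = 1)
    -- q1(t) is a mixed best reply of player 1 to the marginal z₂(t)
    (hbr1 : ∀ t ≥ (1:ℝ), ∑ a, q1 t a * (∑ b, (∑ a', z t a' b) * u1 a b)
        = Finset.univ.sup' Finset.univ_nonempty (fun k => ∑ b, (∑ a', z t a' b) * u1 k b))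
    -- q2(t) is a mixed best reply of player 2 to the marginal z₁(t)
    (hbr2 : ∀ t ≥ (1:ℝ), ∑ b, q2 t b * (∑ a, (∑ b', z t a b') * u2 a b)
        = Finset.univ.sup' Finset.univ_nonempty (fun s => ∑ a, (∑ b', z t a b') * u2 a s))
    -- absolutely continuous solution of ż(t) = (1/t)(q₁(t) ⊗ q₂(t) − z(t)), integral form
    (hint : ∀ a b, ∀ t ≥ (1:ℝ), IntervalIntegrable
      (fun s => (1 / s) * (q1 s a * q2 s b - z s a b)) volume 1 t)
    (hsol : ∀ t ≥ (1:ℝ), ∀ a b,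
      z t a b = z 1 a b + ∫ s in (1:ℝ)..t, (1 / s) * (q1 s a * q2 s b - z s a b)) :
    let v1 : ℝ → ℝ := fun t =>
      Finset.univ.sup' Finset.univ_nonempty (fun k => ∑ b, (∑ a', z t a' b) * u1 k b)
        - ∑ a, ∑ b, z t a b * u1 a b
    let v2 : ℝ → ℝ := fun t =>
      Finset.univ.sup' Finset.univ_nonempty (fun s => ∑ a, (∑ b', z t a b') * u2 a s)
        - ∑ a, ∑ b, z t a b * u2 a b
    ((∀ᵐ t ∂(volume.restrict (Set.Ioi (1:ℝ))),
        0 < v1 t → HasDerivAt v1 (-(1 / t) * v1 t) t)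
      ∧ (∀ᵐ t ∂(volume.restrict (Set.Ioi (1:ℝ))),
        0 < v2 t → HasDerivAt v2 (-(1 / t) * v2 t) t))
    ∧ ((∀ t ≥ (1:ℝ), max (v1 t) 0 ≤ (1 / t) * max (v1 1) 0)
      ∧ (∀ t ≥ (1:ℝ), max (v2 t) 0 ≤ (1 / t) * max (v2 1) 0))
    ∧ (Tendsto v1 atTop (nhds 0) ∧ Tendsto v2 atTop (nhds 0)) := by
  intro v1 v2
  have h1 : ∀ t ≥ (1:ℝ), t * v1 t = v1 1 :=
    mul_maxRegret_eq_of_fictitiousPlay u1 z q1 q2 hq1prob hbr1 hint hsol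
  -- player 2 is player 1 of the transposed game
  have h2 : ∀ t ≥ (1:ℝ), t * v2 t = v2 1 := by
    have hv2 : ∀ t, v2 t = maxRegret (fun s a => u2 a s) (fun b a => z t a b) := fun t => by
      simp only [v2, maxRegret]
      rw [Finset.sum_comm]
    simp only [hv2]
    refine mul_maxRegret_eq_of_fictitiousPlay _ (fun t b a => z t a b) q2 q1 hq2prob hbr2
      (fun b a t ht => ?_) (fun t ht b a => ?_)
    · simpa only [mul_comm (q2 _ b)] using hint a b t ht
    · simpa only [mul_comm (q2 _ b)] using hsol t ht a b
  have hderiv : ∀ V : ℝ → ℝ, (∀ t ≥ (1:ℝ), t * V t = V 1) →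
      ∀ᵐ t ∂(volume.restrict (Set.Ioi (1:ℝ))), 0 < V t → HasDerivAt V (-(1 / t) * V t) t :=
    fun V hV => by
      filter_upwards [ae_restrict_mem measurableSet_Ioi] with t ht _
      exact hasDerivAt_of_forall_mul_eq hV ht
  exact ⟨⟨hderiv v1 h1, hderiv v2 h2⟩,
    ⟨fun t => max_le_of_forall_mul_eq h1, fun t => max_le_of_forall_mul_eq h2⟩,
    tendsto_zero_of_forall_mul_eq h1, tendsto_zero_of_forall_mul_eq h2⟩

/-- along any absolutely continuous solution of continuous fictitious play
(written in integral form), each player's maximal regret v_i satisfies v̇_i = −(1/t)v_i a.e.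
where v_i > 0, [v_i(t)]₊ ≤ (1/t)[v_i(1)]₊, and v_i(t) → 0 (convergence to the reduced
Hannan set). -/
theorem stmt_9 {A1 A2 : Type*} [Fintype A1] [Fintype A2] [Nonempty A1] [Nonempty A2]
    (u1 u2 : A1 → A2 → ℝ)
    (z : ℝ → A1 → A2 → ℝ) (q1 : ℝ → A1 → ℝ) (q2 : ℝ → A2 → ℝ)
    (hz : ∀ t ≥ (1:ℝ), (∀ a b, 0 ≤ z t a b) ∧ ∑ a, ∑ b, z t a b = 1)
    (hq1prob : ∀ t ≥ (1:ℝ), (∀ a, 0 ≤ q1 t a) ∧ ∑ a, q1 t a = 1)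
    (hq2prob : ∀ t ≥ (1:ℝ), (∀ b, 0 ≤ q2 t b) ∧ ∑ b, q2 t b = 1)
    -- q1(t) is a mixed best reply of player 1 to the marginal z₂(t)
    (hbr1 : ∀ t ≥ (1:ℝ), ∑ a, q1 t a * (∑ b, (∑ a', z t a' b) * u1 a b)
        = Finset.univ.sup' Finset.univ_nonempty (fun k => ∑ b, (∑ a', z t a' b) * u1 k b))
    -- q2(t) is a mixed best reply of player 2 to the marginal z₁(t)
    (hbr2 : ∀ t ≥ (1:ℝ), ∑ b, q2 t b * (∑ a, (∑ b', z t a b') * u2 a b)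
        = Finset.univ.sup' Finset.univ_nonempty (fun s => ∑ a, (∑ b', z t a b') * u2 a s))
    -- absolutely continuous solution of ż(t) = (1/t)(q₁(t) ⊗ q₂(t) − z(t)), integral form
    (hint : ∀ a b, ∀ t ≥ (1:ℝ), IntervalIntegrable
      (fun s => (1 / s) * (q1 s a * q2 s b - z s a b)) volume 1 t)
    (hsol : ∀ t ≥ (1:ℝ), ∀ a b,
      z t a b = z 1 a b + ∫ s in (1:ℝ)..t, (1 / s) * (q1 s a * q2 s b - z s a b)) :
    let v1 : ℝ → ℝ := fun t =>
      Finset.univ.sup' Finset.univ_nonempty (fun k => ∑ b, (∑ a', z t a' b) * u1 k b)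
        - ∑ a, ∑ b, z t a b * u1 a b
    let v2 : ℝ → ℝ := fun t =>
      Finset.univ.sup' Finset.univ_nonempty (fun s => ∑ a, (∑ b', z t a b') * u2 a s)
        - ∑ a, ∑ b, z t a b * u2 a b
    ((∀ᵐ t ∂(volume.restrict (Set.Ioi (1:ℝ))),
        0 < v1 t → HasDerivAt v1 (-(1 / t) * v1 t) t)
      ∧ (∀ᵐ t ∂(volume.restrict (Set.Ioi (1:ℝ))),
        0 < v2 t → HasDerivAt v2 (-(1 / t) * v2 t) t))
    ∧ ((∀ t ≥ (1:ℝ), max (v1 t) 0 ≤ (1 / t) * max (v1 1) 0)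
      ∧ (∀ t ≥ (1:ℝ), max (v2 t) 0 ≤ (1 / t) * max (v2 1) 0))
    ∧ (Tendsto v1 atTop (nhds 0) ∧ Tendsto v2 atTop (nhds 0)) :=
  stmt_9_general u1 u2 z q1 q2 hq1prob hq2prob hbr1 hbr2 hint hsol
end

section
/- Suppose a player always plays a fixed pure action c from period t_0 onward in a repeated finite two-player game, and at each period her maximal regret is nonpositive: R_{i,max}(z(t)) ≤ 0 for all t > t_0. Then t · R_{i,c}(z(t)) = t_0 · R_{i,c}(z(t_0)) for all t > t_0; consequently R_{i,c}(z(t)) → 0 and R_{i,max}(z(t)) → 0 as t → ∞, and at each period t the player plays an ε(t)-best reply to z_{-i}(t) with ε(t) = R_{i,max}(z(t)) − R_{i,c}(z(t)) → 0. -/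
open Finset Filter

/-!
Writing `z(t)` as the empirical frequencies of the first `t` profiles, `t · R_k(z(t))` is the
cumulative regret `∑_{τ ≤ t} (u(k, a₂(τ)) − u(a(τ)))`. For `k = c` its increments vanish once
the player plays `c`, so `t · R_c(z(t))` keeps its value at `t₀` and `R_c(z(t)) = O(1/t)`.
The maximal regret is squeezed between `R_c` and `0`, and `R_max − R_c` is exactly the gap
between the best payoff against `z₋ᵢ(t)` and the payoff of `c`.
-/

/-- Regret of player 1 for action k at the correlated action z. -/
noncomputable def reg12 {A1 A2 : Type*} [Fintype A1] [Fintype A2]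
    (u : A1 → A2 → ℝ) (z : A1 → A2 → ℝ) (k : A1) : ℝ :=
  (∑ b, (∑ a, z a b) * u k b) - ∑ a, ∑ b, z a b * u a b

section EmpiricalDistribution

variable {A1 A2 : Type*} [Fintype A1] [Fintype A2]

lemma sum_sum_count_mul [DecidableEq A1] [DecidableEq A2] (a : ℕ → A1 × A2) (s : Finset ℕ)
    (f : A1 → A2 → ℝ) :
    ∑ p, ∑ q, (∑ τ ∈ s, if a τ = (p, q) then (1 : ℝ) else 0) * f p q
      = ∑ τ ∈ s, f (a τ).1 (a τ).2 := by
  rw [← Fintype.sum_prod_type' (f := fun p q => (∑ τ ∈ s, if a τ = (p, q) then (1 : ℝ) else 0)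
    * f p q)]
  simp only [Prod.mk.eta, Finset.sum_mul, ite_mul, one_mul, zero_mul]
  rw [Finset.sum_comm]
  simp only [Finset.sum_ite_eq, Finset.mem_univ, if_true]

lemma sum_marginal_mul (z : A1 → A2 → ℝ) (g : A2 → ℝ) :
    ∑ b, (∑ p, z p b) * g b = ∑ p, ∑ q, z p q * g q := by
  simp only [Finset.sum_mul]
  exact Finset.sum_comm

lemma natCast_mul_reg12_eq_sum [DecidableEq A1] [DecidableEq A2] (u : A1 → A2 → ℝ)
    (a : ℕ → A1 × A2) {t : ℕ} (ht : 1 ≤ t) (z : A1 → A2 → ℝ)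
    (hz : ∀ p q, z p q
      = (1 / (t : ℝ)) * ∑ τ ∈ Finset.Icc 1 t, (if a τ = (p, q) then (1 : ℝ) else 0))
    (k : A1) :
    (t : ℝ) * reg12 u z k = ∑ τ ∈ Finset.Icc 1 t, (u k (a τ).2 - u (a τ).1 (a τ).2) := by
  have ht' : (t : ℝ) ≠ 0 := by positivity
  simp only [reg12, sum_marginal_mul, hz, mul_assoc, ← Finset.mul_sum, sum_sum_count_mul,
    Finset.sum_sub_distrib]
  field_simp

lemma sup'_reg12 [Nonempty A1] (u : A1 → A2 → ℝ) (z : A1 → A2 → ℝ) :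
    Finset.univ.sup' Finset.univ_nonempty (fun k => reg12 u z k)
      = Finset.univ.sup' Finset.univ_nonempty (fun k => ∑ b, (∑ p, z p b) * u k b)
        - ∑ p, ∑ q, z p q * u p q := by
  simp only [reg12, sub_eq_add_neg, Finset.sup'_add]

end EmpiricalDistribution

lemma tendsto_zero_of_natCast_mul_eventually_eq {x : ℕ → ℝ} {C : ℝ}
    (h : ∀ᶠ t : ℕ in atTop, (t : ℝ) * x t = C) : Tendsto x atTop (nhds 0) := by
  refine (tendsto_const_div_atTop_nhds_zero_nat C).congr' ?_
  filter_upwards [h, eventually_gt_atTop 0] with t hxt ht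
  rw [← hxt, mul_div_cancel_left₀ _ (by positivity)]

theorem stmt_12_general {A1 A2 : Type*} [Fintype A1] [Fintype A2] [Nonempty A1]
    [DecidableEq A1] [DecidableEq A2]
    (u : A1 → A2 → ℝ) (a : ℕ → A1 × A2) (c : A1) (t0 : ℕ)
    (hc : ∀ τ, t0 < τ → (a τ).1 = c)
    (z : ℕ → A1 → A2 → ℝ)
    (hz : ∀ t, 1 ≤ t → ∀ p q, z t p q
      = (1 / (t : ℝ)) * ∑ τ ∈ Finset.Icc 1 t, (if a τ = (p, q) then (1:ℝ) else 0))
    (hmax : ∀ t, t0 < t → ∀ k, reg12 u (z t) k ≤ 0) :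
    (∀ t, t0 < t → (t : ℝ) * reg12 u (z t) c = (t0 : ℝ) * reg12 u (z t0) c)
    ∧ Tendsto (fun t => reg12 u (z t) c) atTop (nhds 0)
    ∧ Tendsto (fun t => Finset.univ.sup' Finset.univ_nonempty (fun k => reg12 u (z t) k))
        atTop (nhds 0)
    ∧ ((∀ t, t0 < t →
        Finset.univ.sup' Finset.univ_nonempty (fun k => ∑ b, (∑ p, z t p b) * u k b)
          - (Finset.univ.sup' Finset.univ_nonempty (fun k => reg12 u (z t) k)
              - reg12 u (z t) c)
        ≤ ∑ b, (∑ p, z t p b) * u c b)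
      ∧ Tendsto (fun t => Finset.univ.sup' Finset.univ_nonempty (fun k => reg12 u (z t) k)
          - reg12 u (z t) c) atTop (nhds 0)) := by
  set S : ℕ → ℝ := fun t => ∑ τ ∈ Finset.Icc 1 t, (u c (a τ).2 - u (a τ).1 (a τ).2)
  have hcum : ∀ t : ℕ, (t : ℝ) * reg12 u (z t) c = S t := by
    intro t
    rcases Nat.eq_zero_or_pos t with rfl | ht
    · simp [S]
    · exact natCast_mul_reg12_eq_sum u a ht (z t) (hz t ht) c
  -- once the player sticks to `c`, the increments `u(c, a₂(τ)) − u(c, a₂(τ))` vanish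
  have hS : ∀ t, t0 ≤ t → S t = S t0 := fun t ht => by
    refine (Finset.sum_subset (Finset.Icc_subset_Icc_right ht) fun τ hτ hτ0 => ?_).symm
    simp only [Finset.mem_Icc, not_and, not_le] at hτ hτ0
    rw [hc τ (hτ0 hτ.1), sub_self]
  have hconst : ∀ t, t0 < t → (t : ℝ) * reg12 u (z t) c = (t0 : ℝ) * reg12 u (z t0) c :=
    fun t ht => by rw [hcum, hcum, hS t ht.le]
  have hRc : Tendsto (fun t => reg12 u (z t) c) atTop (nhds 0) :=
    tendsto_zero_of_natCast_mul_eventually_eq ((eventually_gt_atTop t0).mono hconst)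
  have hRmax : Tendsto (fun t => Finset.univ.sup' Finset.univ_nonempty
      (fun k => reg12 u (z t) k)) atTop (nhds 0) := by
    refine tendsto_of_tendsto_of_tendsto_of_le_of_le' hRc tendsto_const_nhds
      (Eventually.of_forall fun t => Finset.le_sup' _ (Finset.mem_univ c)) ?_
    filter_upwards [eventually_gt_atTop t0] with t ht
    exact Finset.sup'_le _ _ fun k _ => hmax t ht k
  refine ⟨hconst, hRc, hRmax, fun t _ => le_of_eq ?_, by simpa using hRmax.sub hRc⟩
  rw [sup'_reg12, reg12]
  ring

/-- if player 1 always plays the fixed action c after period t₀ and her maximal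
regret is nonpositive at every period after t₀, then t·R_c(z(t)) is constant, R_c(z(t)) → 0,
R_max(z(t)) → 0, and she plays an ε(t)-best reply with ε(t) = R_max(z(t)) − R_c(z(t)) → 0. -/
theorem stmt_12 {A1 A2 : Type*} [Fintype A1] [Fintype A2] [Nonempty A1] [Nonempty A2]
    [DecidableEq A1] [DecidableEq A2]
    (u : A1 → A2 → ℝ) (a : ℕ → A1 × A2) (c : A1) (t0 : ℕ) (ht0 : 1 ≤ t0)
    (hc : ∀ τ, t0 < τ → (a τ).1 = c)
    (z : ℕ → A1 → A2 → ℝ)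
    (hz : ∀ t, 1 ≤ t → ∀ p q, z t p q
      = (1 / (t : ℝ)) * ∑ τ ∈ Finset.Icc 1 t, (if a τ = (p, q) then (1:ℝ) else 0))
    (hmax : ∀ t, t0 < t → ∀ k, reg12 u (z t) k ≤ 0) :
    (∀ t, t0 < t → (t : ℝ) * reg12 u (z t) c = (t0 : ℝ) * reg12 u (z t0) c)
    ∧ Tendsto (fun t => reg12 u (z t) c) atTop (nhds 0)
    ∧ Tendsto (fun t => Finset.univ.sup' Finset.univ_nonempty (fun k => reg12 u (z t) k))
        atTop (nhds 0)
    ∧ ((∀ t, t0 < t →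
        Finset.univ.sup' Finset.univ_nonempty (fun k => ∑ b, (∑ p, z t p b) * u k b)
          - (Finset.univ.sup' Finset.univ_nonempty (fun k => reg12 u (z t) k)
              - reg12 u (z t) c)
        ≤ ∑ b, (∑ p, z t p b) * u c b)
      ∧ Tendsto (fun t => Finset.univ.sup' Finset.univ_nonempty (fun k => reg12 u (z t) k)
          - reg12 u (z t) c) atTop (nhds 0)) :=
  stmt_12_general u a c t0 hc z hz hmax
end
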